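/- Let G be a finite connected graph of order at least 2, let H be a finite graph with at least one vertex, and let 𝓜 be the collection of all monophonic position sets of G. For M ∈ 𝓜, let n_M be the number of vertices of M lying in components of the subgraph of G induced by M that have order at least 2, and let r_M be the number of components of the subgraph induced by M that consist of a single vertex. Then mp(G ∘ H) = max over M ∈ 𝓜 of (n_M·ω(H) + r_M·mp(H)). -/

import Mathlib

open SimpleGraph

/-- A walk is *monophonic* if it is an induced path: it is a path and the only
edges of the graph between vertices of the walk are the edges of the walk. -/
def SimpleGraph.Walk.IsMonophonic {V : Type*} {G : SimpleGraph V} {u v : V}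
    (p : G.Walk u v) : Prop :=
  p.IsPath ∧ ∀ a b : V, a ∈ p.support → b ∈ p.support → G.Adj a b → p.toSubgraph.Adj a b

/-- A set `S` is a *monophonic position set* if no monophonic path contains
more than two vertices of `S`. -/
def SimpleGraph.IsMPSet {V : Type*} (G : SimpleGraph V) (S : Set V) : Prop :=
  ∀ ⦃u v : V⦄ (p : G.Walk u v), p.IsMonophonic → ({x ∈ S | x ∈ p.support}).ncard ≤ 2

/-- The *monophonic position number*: the largest cardinality of a monophonic
position set. -/
noncomputable def SimpleGraph.mpNum {V : Type*} (G : SimpleGraph V) : ℕ :=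
  sSup {n | ∃ S : Set V, G.IsMPSet S ∧ S.ncard = n}

/-- The *lexicographic product* `G ∘ H`: `(g₁,h₁)` is adjacent to `(g₂,h₂)` iff
`g₁ ~ g₂` in `G`, or `g₁ = g₂` and `h₁ ~ h₂` in `H`. -/
def SimpleGraph.lexProd {α β : Type*} (G : SimpleGraph α) (H : SimpleGraph β) :
    SimpleGraph (α × β) where
  Adj x y := G.Adj x.1 y.1 ∨ (x.1 = y.1 ∧ H.Adj x.2 y.2)
  symm := by
    constructor
    rintro x y (h | ⟨h1, h2⟩)
    · exact Or.inl h.symm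
    · exact Or.inr ⟨h1.symm, h2.symm⟩
  loopless := by
    constructor
    rintro x (h | ⟨-, h⟩)
    · exact G.irrefl h
    · exact H.irrefl h


/-!
In `G.lexProd H` consecutive vertices of a path lie in equal or adjacent `G`-fibres, and a
monophonic path admits no adjacency between non-consecutive vertices. Hence a monophonic path
either stays inside one fibre `{x} × V(H)`, or visits pairwise distinct fibres, or is a path
`(x, h₁) (y, k) (x, h₂)` with `x ~ y` and `h₁ ≁ h₂`. In the first two cases it is the copy of a
monophonic path of `H`, resp. projects to one of `G`. So for a monophonic position set `S` of
`G ∘ H`, the projection `M` of `S` to `G` and every fibre of `S` are monophonic position sets,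
and the third shape forces the fibre over a vertex with a neighbour in `M` to be a clique; this
bounds `|S|`. Conversely, the same trichotomy shows that `(non-isolated part of M) × K ∪
(isolated part of M) × W` is a monophonic position set for every monophonic position set `M` of
`G`, clique `K` and monophonic position set `W` of `H`.
-/

theorem Set.ncard_le_sum_ncard_fiber {α β : Type*} [Fintype α] (S : Set (α × β)) :
    S.ncard ≤ ∑ x, {y | (x, y) ∈ S}.ncard := by
  have hS : S = ⋃ x, {x} ×ˢ {y | (x, y) ∈ S} := by
    ext ⟨x, y⟩
    simp
  calc S.ncard = (⋃ x, {x} ×ˢ {y | (x, y) ∈ S}).ncard := congrArg Set.ncard hS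
    _ ≤ ∑ x, ({x} ×ˢ {y | (x, y) ∈ S}).ncard := Set.ncard_iUnion_le_of_fintype _
    _ = ∑ x, {y | (x, y) ∈ S}.ncard := by simp [Set.ncard_prod]

namespace SimpleGraph

section Monophonic

variable {V V' : Type*} {G : SimpleGraph V} {G' : SimpleGraph V'}

namespace Walk

variable {u v : V} {p : G.Walk u v}

theorem IsMonophonic.adj_getVert (hp : p.IsMonophonic) {i j : ℕ} (hi : i ≤ p.length)
    (hj : j ≤ p.length) (hadj : G.Adj (p.getVert i) (p.getVert j)) :
    i + 1 = j ∨ j + 1 = i := by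
  obtain ⟨k, hk, hklt⟩ := p.toSubgraph_adj_iff.mp
    (hp.2 _ _ (p.getVert_mem_support i) (p.getVert_mem_support j) hadj)
  have hinj := hp.1.getVert_injOn
  rcases Sym2.eq_iff.mp hk with ⟨hki, hkj⟩ | ⟨hkj, hki⟩ <;>
  · have := hinj (by simp; lia) (by simpa using hi) hki
    have := hinj (by simp; lia) (by simpa using hj) hkj
    lia

theorem exists_support_eq_map (p : G.Walk u v) (f : V → V')
    (hf : ∀ a ∈ p.support, ∀ b ∈ p.support, G.Adj a b → G'.Adj (f a) (f b)) :
    ∃ q : G'.Walk (f u) (f v),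
      q.support = p.support.map f ∧ q.edges = p.edges.map (Sym2.map f) := by
  induction p with
  | nil => exact ⟨nil, by simp⟩
  | @cons a b c h p ih =>
    obtain ⟨q, hsupp, hedges⟩ :=
      ih fun x hx y hy => hf x (List.mem_cons_of_mem _ hx) y (List.mem_cons_of_mem _ hy)
    exact ⟨cons (hf a (by simp) b (by simp) h) q, by simp [hsupp], by simp [hedges]⟩

theorem IsMonophonic.exists_map (hp : p.IsMonophonic) (f : V → V')
    (hinj : Set.InjOn f {w | w ∈ p.support})
    (hadj : ∀ a ∈ p.support, ∀ b ∈ p.support, G'.Adj (f a) (f b) ↔ G.Adj a b) :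
    ∃ q : G'.Walk (f u) (f v), q.IsMonophonic ∧ q.support = p.support.map f := by
  obtain ⟨q, hsupp, hedges⟩ :=
    p.exists_support_eq_map f fun a ha b hb => (hadj a ha b hb).mpr
  refine ⟨q, ⟨isPath_def _ |>.mpr (hsupp ▸ hp.1.support_nodup.map_on hinj), ?_⟩, hsupp⟩
  intro a' b' ha' hb' hab'
  rw [hsupp, List.mem_map] at ha' hb'
  obtain ⟨a, ha, rfl⟩ := ha'
  obtain ⟨b, hb, rfl⟩ := hb'
  have hab := hp.2 a b ha hb ((hadj a ha b hb).mp hab')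
  rw [adj_toSubgraph_iff_mem_edges] at hab ⊢
  rw [hedges]
  exact List.mem_map_of_mem hab

theorem isMonophonic_cons_cons_nil {a b c : V} (hab : G.Adj a b) (hbc : G.Adj b c)
    (hac : a ≠ c) (hnac : ¬ G.Adj a c) : (cons hab (cons hbc nil)).IsMonophonic := by
  refine ⟨by simp [hab.ne, hbc.ne, hac], ?_⟩
  intro x y hx hy hxy
  simp only [support_cons, support_nil, List.mem_cons, List.not_mem_nil, or_false] at hx hy
  rcases hx with rfl | rfl | rfl <;> rcases hy with rfl | rfl | rfl <;>
    simp_all [hxy.symm]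

theorem finite_sep_mem_support (p : G.Walk u v) (S : Set V) : {x ∈ S | x ∈ p.support}.Finite :=
  p.support.finite_toSet.subset fun _ hx => hx.2

end Walk

theorem ncard_sep_mem_le_of_not_mem {S : Set V} {l : List V} {z : V} (hz : z ∈ l) (hzS : z ∉ S) :
    {y ∈ S | y ∈ l}.ncard ≤ l.length - 1 := by
  classical
  calc {y ∈ S | y ∈ l}.ncard ≤ ((l.erase z).toFinset : Set V).ncard :=
        Set.ncard_le_ncard fun y ⟨hyS, hy⟩ => by
          simpa using (List.mem_erase_of_ne (ne_of_mem_of_not_mem hyS hzS)).mpr hy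
    _ ≤ (l.erase z).length := by rw [Set.ncard_coe_finset]; exact List.toFinset_card_le _
    _ = l.length - 1 := List.length_erase_of_mem hz

theorem isMPSet_empty : G.IsMPSet ∅ := fun _ _ _ _ => by simp

theorem IsMPSet.subset {S T : Set V} (hT : G.IsMPSet T) (hST : S ⊆ T) : G.IsMPSet S :=
  fun _ _ p hp => (Set.ncard_le_ncard (fun _ hx => And.imp_left (@hST _) hx)
    (p.finite_sep_mem_support T)).trans (hT p hp)

theorem bddAbove_setOf_isMPSet_ncard [Finite V] :
    BddAbove {n | ∃ S : Set V, G.IsMPSet S ∧ S.ncard = n} :=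
  ⟨Nat.card V, by rintro _ ⟨S, -, rfl⟩; exact S.ncard_le_card⟩

theorem IsMPSet.ncard_le_mpNum [Finite V] {S : Set V} (hS : G.IsMPSet S) : S.ncard ≤ G.mpNum :=
  le_csSup bddAbove_setOf_isMPSet_ncard ⟨S, hS, rfl⟩

theorem exists_isMPSet_ncard_eq_mpNum [Finite V] : ∃ S, G.IsMPSet S ∧ S.ncard = G.mpNum :=
  Nat.sSup_mem (s := {n | ∃ S : Set V, G.IsMPSet S ∧ S.ncard = n})
    ⟨0, ∅, isMPSet_empty, Set.ncard_empty V⟩ bddAbove_setOf_isMPSet_ncard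

theorem IsMPSet.ncard_le_two_of_map {S' : Set V'} (hS' : G'.IsMPSet S') {u v : V}
    {p : G.Walk u v} (hp : p.IsMonophonic) (f : V → V') (hinj : Set.InjOn f {w | w ∈ p.support})
    (hadj : ∀ a ∈ p.support, ∀ b ∈ p.support, G'.Adj (f a) (f b) ↔ G.Adj a b) {S : Set V}
    (hmaps : ∀ w ∈ p.support, w ∈ S → f w ∈ S') : {w ∈ S | w ∈ p.support}.ncard ≤ 2 := by
  obtain ⟨q, hq, hsupp⟩ := hp.exists_map f hinj hadj
  calc {w ∈ S | w ∈ p.support}.ncard ≤ {w ∈ S' | w ∈ q.support}.ncard :=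
        Set.ncard_le_ncard_of_injOn f
          (fun w hw => ⟨hmaps w hw.2 hw.1, hsupp ▸ List.mem_map_of_mem hw.2⟩)
          (hinj.mono fun _ hw => hw.2) (q.finite_sep_mem_support S')
    _ ≤ 2 := hS' q hq

theorem IsMPSet.comap {S : Set V'} (hS : G'.IsMPSet S) (f : G ↪g G') : G.IsMPSet (f ⁻¹' S) :=
  fun _ _ _ hp => hS.ncard_le_two_of_map hp f f.injective.injOn
    (fun _ _ _ _ => f.map_adj_iff) fun _ _ hw => hw

theorem IsClique.isMPSet {K : Set V} (hK : G.IsClique K) : G.IsMPSet K := by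
  intro u v p hp
  by_contra! h
  obtain ⟨a, ⟨haK, ha⟩, b, ⟨hbK, hb⟩, c, ⟨hcK, hc⟩, hab, hac, hbc⟩ :=
    (Set.two_lt_ncard (p.finite_sep_mem_support K)).mp h
  obtain ⟨i, rfl, hi⟩ := p.mem_support_iff_exists_getVert.mp ha
  obtain ⟨j, rfl, hj⟩ := p.mem_support_iff_exists_getVert.mp hb
  obtain ⟨k, rfl, hk⟩ := p.mem_support_iff_exists_getVert.mp hc
  have := hp.adj_getVert hi hj (hK haK hbK hab)
  have := hp.adj_getVert hi hk (hK haK hcK hac)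
  have := hp.adj_getVert hj hk (hK hbK hcK hbc)
  lia

theorem IsClique.ncard_le_cliqueNum [Finite V] {K : Set V} (hK : G.IsClique K) :
    K.ncard ≤ G.cliqueNum := by
  have := Fintype.ofFinite V
  classical
  rw [Set.ncard_eq_toFinset_card']
  exact IsClique.card_le_cliqueNum (tc := by simpa using hK)

section InducedSequence

variable {f : ℕ → V} {n : ℕ}

theorem seq_const_of_repeat (hstep : ∀ i < n, f i = f (i + 1) ∨ G.Adj (f i) (f (i + 1)))
    (hfar : ∀ i ≤ n, ∀ j ≤ n, G.Adj (f i) (f j) → i + 1 = j ∨ j + 1 = i) {i : ℕ} (hi : i < n)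
    (hrun : f i = f (i + 1)) : ∀ j ≤ n, f j = f 0 := by
  have hpropagate (j : ℕ) (hj : j + 2 ≤ n) : f j = f (j + 1) ↔ f (j + 1) = f (j + 2) := by
    constructor
    · refine fun h => (hstep (j + 1) (by lia)).resolve_right fun hadj => ?_
      have := hfar j (by lia) (j + 2) hj (by rwa [h])
      lia
    · refine fun h => (hstep j (by lia)).resolve_right fun hadj => ?_
      have := hfar j (by lia) (j + 2) hj (by rwa [← h])
      lia
  have hruns (j : ℕ) (hj : j < n) : f j = f (j + 1) ↔ f 0 = f 1 := by
    induction j with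
    | zero => rfl
    | succ j ih => exact (hpropagate j (by lia)).symm.trans (ih (by lia))
  intro j hj
  induction j with
  | zero => rfl
  | succ j ih => exact ((hruns j (by lia)).mpr ((hruns i hi).mp hrun)).symm.trans (ih (by lia))

theorem seq_injOn_or_cherry (hadj : ∀ i < n, G.Adj (f i) (f (i + 1)))
    (hfar : ∀ i ≤ n, ∀ j ≤ n, G.Adj (f i) (f j) → i + 1 = j ∨ j + 1 = i) :
    Set.InjOn f {i | i ≤ n} ∨ (n = 2 ∧ f 0 = f 2) := by
  have hcherry (i j : ℕ) (hij : i < j) (hj : j ≤ n) (heq : f i = f j) : i = 0 ∧ j = 2 ∧ n = 2 := by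
    have hsucc : j ≠ i + 1 := by
      rintro rfl
      exact (hadj i hj).ne heq
    have hmid := hfar (i + 1) (by lia) j hj (by rw [← heq]; exact (hadj i (by lia)).symm)
    have hstart : i = 0 := by
      by_contra hi
      have := hfar (i - 1) (by lia) j hj
        (by rw [← heq]; convert hadj (i - 1) (by lia) using 2; lia)
      lia
    have hend : n = j := by
      by_contra hn
      have := hfar i (by lia) (j + 1) (by lia) (by rw [heq]; exact hadj j (by lia))
      lia
    lia
  by_cases hinj : Set.InjOn f {i | i ≤ n}
  · exact Or.inl hinj
  · right
    simp only [Set.InjOn, Set.mem_ofPred_eq, not_forall] at hinj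
    obtain ⟨i, hi, j, hj, heq, hne⟩ := hinj
    rcases Nat.lt_or_gt_of_ne hne with h | h
    · obtain ⟨rfl, rfl, rfl⟩ := hcherry i j h hj heq
      exact ⟨rfl, heq⟩
    · obtain ⟨rfl, rfl, rfl⟩ := hcherry j i h hi heq.symm
      exact ⟨rfl, heq.symm⟩

end InducedSequence

end Monophonic

section LexProd

variable {α β : Type*} {G : SimpleGraph α} {H : SimpleGraph β}

/- The numbers `n_M` and `r_M` of the statement are the cardinalities of these two sets: a vertex
of `M` lies in a component of `G[M]` of order at least 2 iff it has a neighbour in `M`. -/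
def nonIsolatedIn (G : SimpleGraph α) (M : Set α) : Set α := {x ∈ M | ∃ y ∈ M, G.Adj x y}

def isolatedIn (G : SimpleGraph α) (M : Set α) : Set α := {x ∈ M | ∀ y ∈ M, ¬ G.Adj x y}

theorem disjoint_nonIsolatedIn_isolatedIn {M : Set α} :
    Disjoint (G.nonIsolatedIn M) (G.isolatedIn M) :=
  Set.disjoint_left.mpr fun _ ⟨_, y, hy, hxy⟩ hx => hx.2 y hy hxy

theorem mem_nonIsolatedIn_or_mem_isolatedIn {M : Set α} {x : α} (hx : x ∈ M) :
    x ∈ G.nonIsolatedIn M ∨ x ∈ G.isolatedIn M := by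
  by_cases h : ∃ y ∈ M, G.Adj x y
  · exact Or.inl ⟨hx, h⟩
  · exact Or.inr ⟨hx, fun y hy hxy => h ⟨y, hy, hxy⟩⟩

@[simp]
theorem lexProd_adj {x y : α × β} :
    (G.lexProd H).Adj x y ↔ G.Adj x.1 y.1 ∨ (x.1 = y.1 ∧ H.Adj x.2 y.2) :=
  Iff.rfl

theorem lexProd_adj_of_fst_eq {x y : α × β} (h : x.1 = y.1) :
    (G.lexProd H).Adj x y ↔ H.Adj x.2 y.2 := by
  simp [h]

theorem Walk.IsMonophonic.lexProd_cases {u v : α × β} {p : (G.lexProd H).Walk u v}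
    (hp : p.IsMonophonic) :
    (∀ w ∈ p.support, w.1 = u.1) ∨ Set.InjOn Prod.fst {w | w ∈ p.support} ∨
      (p.length = 2 ∧ u.1 = v.1 ∧ G.Adj u.1 (p.getVert 1).1 ∧ u.2 ≠ v.2 ∧ ¬ H.Adj u.2 v.2) := by
  set f : ℕ → α := fun i => (p.getVert i).1
  have hfar : ∀ i ≤ p.length, ∀ j ≤ p.length, G.Adj (f i) (f j) → i + 1 = j ∨ j + 1 = i :=
    fun i hi j hj h => hp.adj_getVert hi hj (Or.inl h)
  have hstep : ∀ i < p.length, f i = f (i + 1) ∨ G.Adj (f i) (f (i + 1)) :=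
    fun i hi => (p.adj_getVert_succ hi).elim Or.inr (Or.inl ∘ And.left)
  by_cases hrun : ∃ i < p.length, f i = f (i + 1)
  · obtain ⟨i, hi, hfi⟩ := hrun
    refine Or.inl fun w hw => ?_
    obtain ⟨j, rfl, hj⟩ := p.mem_support_iff_exists_getVert.mp hw
    simpa [f] using seq_const_of_repeat hstep hfar hi hfi j hj
  push Not at hrun
  have hadj (i : ℕ) (hi : i < p.length) : G.Adj (f i) (f (i + 1)) :=
    (hstep i hi).resolve_left (hrun i hi)
  rcases seq_injOn_or_cherry hadj hfar with hinj | ⟨hlen, hends⟩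
  · refine Or.inr (Or.inl fun a ha b hb hab => ?_)
    obtain ⟨i, rfl, hi⟩ := p.mem_support_iff_exists_getVert.mp ha
    obtain ⟨j, rfl, hj⟩ := p.mem_support_iff_exists_getVert.mp hb
    rw [hinj hi hj hab]
  · have hv : p.getVert 2 = v := hlen ▸ p.getVert_length
    have hne : u ≠ v := fun h => by
      have := hp.1.getVert_injOn (by simp) (by simp [hlen]) (p.getVert_zero.trans (h.trans hv.symm))
      lia
    have hnadj : ¬ (G.lexProd H).Adj u v := fun h => by
      have := hp.adj_getVert (i := 0) (j := 2) (by lia) (by lia) (by rwa [p.getVert_zero, hv])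
      lia
    have hfst : u.1 = v.1 := by simpa [f, hv] using hends
    refine Or.inr (Or.inr ⟨hlen, hfst, by simpa [f] using hadj 0 (by lia),
      fun h => hne (Prod.ext hfst h), fun h => hnadj (Or.inr ⟨hfst, h⟩)⟩)

theorem IsMPSet.fiber {S : Set (α × β)} (hS : (G.lexProd H).IsMPSet S) (x : α) :
    H.IsMPSet {y | (x, y) ∈ S} :=
  hS.comap ⟨⟨Prod.mk x, Prod.mk_right_injective x⟩, by simp⟩

theorem IsMPSet.image_fst {S : Set (α × β)} (hS : (G.lexProd H).IsMPSet S) :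
    G.IsMPSet (Prod.fst '' S) := by
  rcases isEmpty_or_nonempty β with hβ | hβ
  · simpa [Set.eq_empty_of_isEmpty S] using isMPSet_empty
  have hsection (x : α) : ∃ y, x ∈ Prod.fst '' S → (x, y) ∈ S := by
    by_cases hx : x ∈ Prod.fst '' S
    · obtain ⟨⟨x, y⟩, hxy, rfl⟩ := hx
      exact ⟨y, fun _ => hxy⟩
    · exact ⟨Classical.arbitrary β, fun h => absurd h hx⟩
  choose σ hσ using hsection
  have hσadj {a b : α} : (G.lexProd H).Adj (a, σ a) (b, σ b) ↔ G.Adj a b := by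
    refine ⟨?_, Or.inl⟩
    rintro (h | ⟨rfl, h⟩)
    · exact h
    · exact absurd h (H.irrefl)
  exact (hS.comap ⟨⟨fun x => (x, σ x), fun a b h => congrArg Prod.fst h⟩, hσadj⟩).subset hσ

theorem IsMPSet.isClique_fiber {S : Set (α × β)} (hS : (G.lexProd H).IsMPSet S) {x y : α}
    (hxy : G.Adj x y) {k : β} (hyk : (y, k) ∈ S) : H.IsClique {h | (x, h) ∈ S} := by
  intro a ha b hb hab
  by_contra hnadj
  have hout : (G.lexProd H).Adj (x, a) (y, k) := Or.inl hxy
  have hback : (G.lexProd H).Adj (y, k) (x, b) := Or.inl hxy.symm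
  have hp := Walk.isMonophonic_cons_cons_nil hout hback (by simpa using hab)
    (by simpa [lexProd_adj_of_fst_eq] using hnadj)
  refine (hS _ hp).not_gt ((Set.two_lt_ncard (Walk.finite_sep_mem_support _ S)).mpr
    ⟨(x, a), ⟨ha, by simp⟩, (y, k), ⟨hyk, by simp⟩, (x, b), ⟨hb, by simp⟩, ?_⟩)
  simp [hxy.ne, hxy.ne', hab]

theorem IsMPSet.ncard_le_lexProd [Fintype α] [Finite β] {S : Set (α × β)}
    (hS : (G.lexProd H).IsMPSet S) :
    S.ncard ≤ (G.nonIsolatedIn (Prod.fst '' S)).ncard * H.cliqueNum +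
      (G.isolatedIn (Prod.fst '' S)).ncard * H.mpNum := by
  classical
  set M := Prod.fst '' S
  have hfiber (x : α) : {y | (x, y) ∈ S}.ncard ≤
      (if x ∈ G.nonIsolatedIn M then H.cliqueNum else 0) +
        (if x ∈ G.isolatedIn M then H.mpNum else 0) := by
    by_cases hA : x ∈ G.nonIsolatedIn M
    · obtain ⟨y, ⟨⟨y, k⟩, hyk, rfl⟩, hxy⟩ := hA.2
      simpa [hA, Set.disjoint_left.mp disjoint_nonIsolatedIn_isolatedIn hA] using
        (hS.isClique_fiber hxy hyk).ncard_le_cliqueNum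
    by_cases hB : x ∈ G.isolatedIn M
    · simpa [hA, hB] using (hS.fiber x).ncard_le_mpNum
    have hx : x ∉ M := fun hx => (mem_nonIsolatedIn_or_mem_isolatedIn hx).elim hA hB
    have hempty : {y | (x, y) ∈ S} = ∅ :=
      Set.eq_empty_of_forall_notMem fun y hy => hx ⟨(x, y), hy, rfl⟩
    simp [hempty]
  calc S.ncard ≤ ∑ x, {y | (x, y) ∈ S}.ncard := Set.ncard_le_sum_ncard_fiber S
    _ ≤ ∑ x, ((if x ∈ G.nonIsolatedIn M then H.cliqueNum else 0) +
          (if x ∈ G.isolatedIn M then H.mpNum else 0)) :=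
        Finset.sum_le_sum fun x _ => hfiber x
    _ = _ := by simp [Finset.sum_add_distrib, Finset.sum_ite, Set.ncard_eq_toFinset_card']

theorem isMPSet_lexProd_union {M : Set α} (hM : G.IsMPSet M) {K W : Set β}
    (hK : H.IsClique K) (hW : H.IsMPSet W) :
    (G.lexProd H).IsMPSet (G.nonIsolatedIn M ×ˢ K ∪ G.isolatedIn M ×ˢ W) := by
  set S := G.nonIsolatedIn M ×ˢ K ∪ G.isolatedIn M ×ˢ W
  have hfst {w : α × β} (hw : w ∈ S) : w.1 ∈ M := hw.elim (·.1.1) (·.1.1)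
  have hfiberK {x : α} (hx : x ∈ G.nonIsolatedIn M) : {y | (x, y) ∈ S} ⊆ K := by
    rintro y (⟨-, hy⟩ | ⟨hxB, -⟩)
    exacts [hy, absurd hxB (Set.disjoint_left.mp disjoint_nonIsolatedIn_isolatedIn hx)]
  have hfiberW {x : α} (hx : x ∉ G.nonIsolatedIn M) : {y | (x, y) ∈ S} ⊆ W := by
    rintro y (⟨hxA, -⟩ | ⟨-, hy⟩)
    exacts [absurd hxA hx, hy]
  have hfiber (x : α) : H.IsMPSet {y | (x, y) ∈ S} := by
    by_cases hx : x ∈ G.nonIsolatedIn M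
    exacts [hK.isMPSet.subset (hfiberK hx), hW.subset (hfiberW hx)]
  intro u v p hp
  rcases hp.lexProd_cases with hconst | hinj | ⟨hlen, hends, hadj, hne, hnadj⟩
  · have hfst_eq {a b} (ha : a ∈ p.support) (hb : b ∈ p.support) : a.1 = b.1 :=
      (hconst a ha).trans (hconst b hb).symm
    refine (hfiber u.1).ncard_le_two_of_map hp Prod.snd
      (fun a ha b hb h => Prod.ext (hfst_eq ha hb) h)
      (fun a ha b hb => (lexProd_adj_of_fst_eq (hfst_eq ha hb)).symm) fun w hw hwS => ?_
    rw [Set.mem_ofPred_eq, ← hconst w hw]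
    exact hwS
  · refine hM.ncard_le_two_of_map hp Prod.fst hinj (fun a ha b hb => ⟨Or.inl, ?_⟩)
      fun w _ hw => hfst hw
    rintro (h | ⟨h₁, h₂⟩)
    · exact h
    · exact absurd (hinj ha hb h₁ ▸ h₂) (H.irrefl)
  · -- All three vertices of the cherry lie in `S`, so its ends lie in the clique fibre over `u.1`.
    by_contra! h
    have hall (z : α × β) (hz : z ∈ p.support) : z ∈ S := by
      by_contra hzS
      have := ncard_sep_mem_le_of_not_mem hz hzS
      rw [p.length_support, hlen] at this
      lia
    have hu : u.1 ∈ G.nonIsolatedIn M :=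
      ⟨hfst (hall u p.start_mem_support), _, hfst (hall _ (p.getVert_mem_support 1)), hadj⟩
    have hvS : (u.1, v.2) ∈ S := by
      rw [hends]
      exact hall v p.end_mem_support
    exact hnadj (hK (hfiberK hu (hall u p.start_mem_support)) (hfiberK hu hvS) hne)

end LexProd

end SimpleGraph

theorem mpNum_lexProd_general {α β : Type*} [Fintype α] [Fintype β]
    (G : SimpleGraph α) (H : SimpleGraph β) :
    (G.lexProd H).mpNum =
      sSup {n : ℕ | ∃ M : Set α, G.IsMPSet M ∧
        n = ({x ∈ M | ∃ y ∈ M, G.Adj x y}).ncard * H.cliqueNum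
          + ({x ∈ M | ∀ y ∈ M, ¬ G.Adj x y}).ncard * H.mpNum} := by
  set value : Set α → ℕ := fun M =>
    (G.nonIsolatedIn M).ncard * H.cliqueNum + (G.isolatedIn M).ncard * H.mpNum
  change _ = sSup {n | ∃ M, G.IsMPSet M ∧ n = value M}
  have hbdd : BddAbove {n | ∃ M, G.IsMPSet M ∧ n = value M} :=
    ((Set.finite_range value).subset (by rintro _ ⟨M, -, rfl⟩; exact ⟨M, rfl⟩)).bddAbove
  apply le_antisymm
  · obtain ⟨S, hS, hcard⟩ := (G.lexProd H).exists_isMPSet_ncard_eq_mpNum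
    exact hcard ▸ hS.ncard_le_lexProd.trans (le_csSup hbdd ⟨_, hS.image_fst, rfl⟩)
  · refine csSup_le ⟨_, ∅, isMPSet_empty, rfl⟩ ?_
    rintro _ ⟨M, hM, rfl⟩
    obtain ⟨K, hK⟩ := H.exists_isNClique_cliqueNum
    obtain ⟨W, hW, hWcard⟩ := H.exists_isMPSet_ncard_eq_mpNum
    have hdisj : Disjoint (G.nonIsolatedIn M ×ˢ (K : Set β)) (G.isolatedIn M ×ˢ W) :=
      Set.disjoint_prod.mpr (Or.inl disjoint_nonIsolatedIn_isolatedIn)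
    calc value M = (G.nonIsolatedIn M ×ˢ (K : Set β) ∪ G.isolatedIn M ×ˢ W).ncard := by
          rw [Set.ncard_union_eq hdisj, Set.ncard_prod, Set.ncard_prod, Set.ncard_coe_finset,
            hK.card_eq, hWcard]
      _ ≤ (G.lexProd H).mpNum := (isMPSet_lexProd_union hM hK.isClique hW).ncard_le_mpNum

/-- For a connected graph `G` of order at least 2 and a graph `H` with at
least one vertex, `mp(G ∘ H)` equals the maximum over all monophonic position sets `M`
of `G` of `n_M·ω(H) + r_M·mp(H)`, where `n_M` is the number of vertices of `M` lying in
components of `G[M]` of order at least 2 (i.e. having a neighbour in `M`) and `r_M` is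
the number of singleton components of `G[M]` (i.e. vertices of `M` with no neighbour
in `M`). -/
theorem mpNum_lexProd {α β : Type*} [Fintype α] [Fintype β] [Nonempty β]
    (G : SimpleGraph α) (H : SimpleGraph β) (hG : G.Connected)
    (hcard : 2 ≤ Fintype.card α) :
    (G.lexProd H).mpNum =
      sSup {n : ℕ | ∃ M : Set α, G.IsMPSet M ∧
        n = ({x ∈ M | ∃ y ∈ M, G.Adj x y}).ncard * H.cliqueNum
          + ({x ∈ M | ∀ y ∈ M, ¬ G.Adj x y}).ncard * H.mpNum} :=
  mpNum_lexProd_general G H
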